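/- Let h : ℝ² → ℝ be continuously differentiable with M := sup_{ℝ²}(|h| + |∇h|) < ∞ and h ≥ 3/4 everywhere. Then there exists r₀ > 0 such that for every r with 0 < r ≤ r₀ there exist δ > 0 and δ' > 0 such that the function H(y) := (r⁴/|y|⁴) h(r² y/|y|²), defined for y ≠ 0, satisfies ∂H/∂y₁ (y) < 0 at every point y = (y₁,y₂) with r/(1+δ) ≤ |y| ≤ r, y₁ > 0 and |y₂| ≤ δ'. In other words, the weight h transported by the Kelvin inversion y ↦ r²y/|y|² and multiplied by the conformal factor r⁴/|y|⁴ is strictly decreasing in the y₁-direction in a thin annular sector near the point (r,0). -/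

import Mathlib

open Real Filter Topology

/-- The weight transported by the Kelvin inversion `y ↦ r² y/|y|²` and
multiplied by the conformal factor `r⁴/|y|⁴`. -/
noncomputable def kelvinWeight (r : ℝ) (h : EuclideanSpace ℝ (Fin 2) → ℝ)
    (y : EuclideanSpace ℝ (Fin 2)) : ℝ :=
  (r^4 / ‖y‖^4) * h ((r^2 / ‖y‖^2) • y)

/-!
The derivative of the inversion `y ↦ r² y/|y|²` is `(r/|y|)²` times a reflection, so the chain-rule
term of `∂H/∂y₁` is at most `r⁶ |y|⁻⁶ M`, while differentiating the conformal factor contributes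
`-4 r⁴ |y|⁻⁶ y₁ h ≤ -3 r⁴ |y|⁻⁶ y₁`. In the sector `r/2 ≤ |y|`, `|y₂| ≤ r/3` one has `y₁ > r/3`,
and `r ≤ 1/M` gives `M r² ≤ r < 3 y₁`.
-/

open EuclideanGeometry RealInnerProductSpace ContinuousLinearMap

section InnerProductSpace

variable {E : Type*} [NormedAddCommGroup E] [InnerProductSpace ℝ E]

theorem inversion_zero_apply (r : ℝ) (y : E) : inversion 0 r y = (r ^ 2 / ‖y‖ ^ 2) • y := by
  simp [inversion, div_pow]

theorem hasFDerivAt_const_div_norm_pow_four (r : ℝ) {y : E} (hy : y ≠ 0) :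
    HasFDerivAt (fun z : E => r ^ 4 / ‖z‖ ^ 4) ((-4 * r ^ 4 / ‖y‖ ^ 6) • innerSL ℝ y) y := by
  have hy' : ‖y‖ ^ 2 ≠ 0 := by positivity
  have hf : (fun z : E => r ^ 4 / ‖z‖ ^ 4) = fun z => r ^ 4 * ((‖z‖ ^ 2)⁻¹) ^ 2 := by
    funext z
    ring
  rw [hf]
  refine (((hasDerivAt_inv hy').comp_hasFDerivAt y
    (hasFDerivAt_id (𝕜 := ℝ) y).norm_sq).pow 2 |>.const_mul (r ^ 4)).congr_fderiv ?_
  ext v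
  simp only [id_eq, Function.comp_apply, Nat.add_one_sub_one, pow_one, nsmul_eq_mul,
    Nat.cast_ofNat, comp_id, neg_smul, smul_neg, neg_apply, smul_apply, coe_innerSL_apply,
    smul_eq_mul, neg_mul]
  field_simp
  ring

end InnerProductSpace

local notation "ℝ²" => EuclideanSpace ℝ (Fin 2)

theorem kelvinWeight_eq_mul_inversion (r : ℝ) (h : ℝ² → ℝ) :
    kelvinWeight r h = fun y => r ^ 4 / ‖y‖ ^ 4 * h (inversion 0 r y) := by
  funext y
  simp [kelvinWeight, inversion_zero_apply]

theorem hasFDerivAt_kelvinWeight {r : ℝ} {h : ℝ² → ℝ} {y : ℝ²} (hy : y ≠ 0)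
    (hh : DifferentiableAt ℝ h (inversion 0 r y)) :
    HasFDerivAt (kelvinWeight r h)
      ((r ^ 4 / ‖y‖ ^ 4) • (fderiv ℝ h (inversion 0 r y)).comp
          ((r / ‖y‖) ^ 2 • ((ℝ ∙ y)ᗮ.reflection : ℝ² →L[ℝ] ℝ²))
        + h (inversion 0 r y) • ((-4 * r ^ 4 / ‖y‖ ^ 6) • innerSL ℝ y)) y := by
  have hinv := hasFDerivAt_inversion (c := (0 : ℝ²)) (R := r) hy
  rw [dist_zero_right, sub_zero] at hinv
  rw [kelvinWeight_eq_mul_inversion]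
  exact (hasFDerivAt_const_div_norm_pow_four r hy).mul (hh.hasFDerivAt.comp y hinv)

theorem fderiv_kelvinWeight_apply_le {r : ℝ} {h : ℝ² → ℝ} {y : ℝ²} (hy : y ≠ 0)
    (hh : DifferentiableAt ℝ h (inversion 0 r y)) (v : ℝ²) :
    fderiv ℝ (kelvinWeight r h) y v ≤ r ^ 4 / ‖y‖ ^ 6 *
      (r ^ 2 * ‖fderiv ℝ h (inversion 0 r y)‖ * ‖v‖ - 4 * h (inversion 0 r y) * ⟪y, v⟫) := by
  set L := fderiv ℝ h (inversion 0 r y)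
  set w := ((r / ‖y‖) ^ 2 • ((ℝ ∙ y)ᗮ.reflection : ℝ² →L[ℝ] ℝ²)) v
  have hw : ‖w‖ = r ^ 2 / ‖y‖ ^ 2 * ‖v‖ := by simp [w, norm_smul, div_pow]
  have hLw : L w ≤ ‖L‖ * ‖w‖ := (le_abs_self _).trans (L.le_opNorm w)
  rw [(hasFDerivAt_kelvinWeight hy hh).fderiv]
  calc _ = r ^ 4 / ‖y‖ ^ 4 * L w - 4 * r ^ 4 / ‖y‖ ^ 6 * h (inversion 0 r y) * ⟪y, v⟫ := by
        simp only [comp_smulₛₗ, ringHom_apply, neg_mul, add_apply, smul_apply, comp_apply,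
          ContinuousLinearEquiv.coe_coe, LinearIsometryEquiv.coe_toContinuousLinearEquiv,
          smul_eq_mul, coe_innerSL_apply, map_smul, L, w]
        ring
    _ ≤ r ^ 4 / ‖y‖ ^ 4 * (‖L‖ * ‖w‖)
          - 4 * r ^ 4 / ‖y‖ ^ 6 * h (inversion 0 r y) * ⟪y, v⟫ := by gcongr
    _ = _ := by
        rw [hw]
        field_simp

theorem div_three_lt_of_half_le_norm {r : ℝ} {y : ℝ²} (hy : r / 2 ≤ ‖y‖) (hy₁ : |y 1| ≤ r / 3)
    (hy₀ : 0 < y 0) : r / 3 < y 0 := by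
  have hnorm : ‖y‖ ^ 2 = y 0 ^ 2 + y 1 ^ 2 := by
    simp [EuclideanSpace.norm_sq_eq, Fin.sum_univ_two]
  have : y 1 ^ 2 ≤ (r / 3) ^ 2 := sq_le_sq' (abs_le.mp hy₁).1 (abs_le.mp hy₁).2
  nlinarith [norm_nonneg y, abs_nonneg (y 1)]

/-- If `h` is `C¹`, bounded together with its gradient, and `h ≥ 3/4`,
then for all sufficiently small `r > 0` the transported weight
`H(y) = (r⁴/|y|⁴) h(r² y/|y|²)` is strictly decreasing in the `y₁`-direction
in a thin annular sector near the point `(r,0)`. -/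
theorem kelvinWeight_decreasing
    (h : EuclideanSpace ℝ (Fin 2) → ℝ) (hC1 : ContDiff ℝ 1 h)
    (M : ℝ) (hM : ∀ x, |h x| + ‖fderiv ℝ h x‖ ≤ M)
    (hpos : ∀ x, 3/4 ≤ h x) :
    ∃ r₀ > 0, ∀ r : ℝ, 0 < r → r ≤ r₀ →
      ∃ δ > 0, ∃ δ' > 0, ∀ y : EuclideanSpace ℝ (Fin 2),
        y ≠ 0 → r / (1 + δ) ≤ ‖y‖ → ‖y‖ ≤ r → 0 < y 0 → |y 1| ≤ δ' →
          fderiv ℝ (kelvinWeight r h) y (EuclideanSpace.single 0 1) < 0 := by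
  have hgrad x : ‖fderiv ℝ h x‖ ≤ M := by linarith [hM x, abs_nonneg (h x)]
  have hMpos : 0 < M := by linarith [hM 0, le_abs_self (h 0), hpos 0, norm_nonneg (fderiv ℝ h 0)]
  refine ⟨M⁻¹, inv_pos.mpr hMpos, fun r hr hrM => ⟨1, one_pos, r / 3, by positivity,
    fun y hy hy_low _ hy₀ hy₁ => ?_⟩⟩
  have hy₀' : r / 3 < y 0 := div_three_lt_of_half_le_norm (by linarith) hy₁ hy₀
  have hMr : M * r ^ 2 ≤ r := by
    have : M * r ≤ 1 := (le_inv_mul_iff₀ hMpos).mp (by rwa [mul_one])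
    nlinarith
  set x := inversion 0 r y
  refine (fderiv_kelvinWeight_apply_le hy (hC1.differentiable one_ne_zero x) _).trans_lt ?_
  rw [PiLp.norm_single, norm_one, mul_one, EuclideanSpace.inner_single_right, one_mul,
    conj_trivial]
  refine mul_neg_of_pos_of_neg (by positivity) ?_
  nlinarith [hgrad x, hpos x]
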